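/- For all natural numbers n, r and all complex numbers ξ, Ω, y, z, Y, Z: H_n(ξ,z|q) · H_r(Ω,Z|q) = Σ_{k=0}^{n} Σ_{p=0}^{r} [n choose k]_q [r choose p]_q (ξ ⊖_q y)^k (Ω ⊖_q Y)^p · H_{n-k}(y,z|q) · H_{r-p}(Y,Z|q). -/
import Mathlib


/-- The q-analogue of a natural number: [n]_q = Σ_{k=1}^n q^{k-1}. -/
noncomputable def qnat (q : ℝ) (n : ℕ) : ℝ := ∑ k ∈ Finset.range n, q ^ k

/-- The q-factorial [n]_q! = Π_{k=1}^n [k]_q, with [0]_q! = 1. -/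
noncomputable def qfact (q : ℝ) (n : ℕ) : ℝ := ∏ k ∈ Finset.range n, qnat q (k + 1)

/-- The Gaussian q-binomial coefficient [n choose k]_q. -/
noncomputable def qbinom (q : ℝ) (n k : ℕ) : ℝ := qfact q n / (qfact q k * qfact q (n - k))

/-- JHC q-subtraction power (x ⊖_q y)^n. -/
noncomputable def qsubPow (q : ℝ) (x y : ℂ) (n : ℕ) : ℂ :=
  ∑ k ∈ Finset.range (n + 1),
    (qbinom q n k : ℂ) * (q : ℂ) ^ (k * (k - 1) / 2) * x ^ (n - k) * (-y) ^ k

/-- JHC q-addition power (x ⊕_q y)^n. -/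
noncomputable def qaddPow (q : ℝ) (x y : ℂ) (n : ℕ) : ℂ :=
  ∑ k ∈ Finset.range (n + 1),
    (qbinom q n k : ℂ) * (q : ℂ) ^ (k * (k - 1) / 2) * x ^ (n - k) * y ^ k

/-- The q-deformed 2D Laguerre polynomial _mL_n(x,y|q). -/
noncomputable def qLag (q : ℝ) (m : ℕ) (x y : ℂ) (n : ℕ) : ℂ :=
  (qfact q n : ℂ) * ∑ k ∈ Finset.range (n / m + 1),
    (q : ℂ) ^ (m * (k * (k - 1) / 2)) * x ^ k * y ^ (n - m * k) /
      ((qfact (q ^ m) k : ℂ) ^ 2 * (qfact q (n - m * k) : ℂ))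

/-- The q-deformed Laguerre-Gould-Hopper polynomial _LH_n^{(m,s)}(x,y,z|q). -/
noncomputable def qLGH (q : ℝ) (m s : ℕ) (x y z : ℂ) (n : ℕ) : ℂ :=
  (qfact q n : ℂ) * ∑ k ∈ Finset.range (n / s + 1),
    (q : ℂ) ^ (s * (k * (k - 1) / 2)) * z ^ k * qLag q m x y (n - s * k) /
      ((qfact (q ^ s) k : ℂ) * (qfact q (n - s * k) : ℂ))

/-- The two-variable q-Gould-Hopper kernel G_n^s(u,v). -/
noncomputable def qGH (q : ℝ) (s : ℕ) (u v : ℂ) (n : ℕ) : ℂ :=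
  (qfact q n : ℂ) * ∑ k ∈ Finset.range (n / s + 1),
    (q : ℂ) ^ (s * (k * (k - 1) / 2)) * u ^ (n - s * k) * v ^ k /
      ((qfact q (n - s * k) : ℂ) * (qfact (q ^ s) k : ℂ))

/-- The kernel G_n^s(ξ ⊖_q y, ζ ⊖_q z), with monomial powers replaced by
JHC q-subtraction powers. -/
noncomputable def qGHsub (q : ℝ) (s : ℕ) (ξ y ζ z : ℂ) (n : ℕ) : ℂ :=
  (qfact q n : ℂ) * ∑ k ∈ Finset.range (n / s + 1),
    (q : ℂ) ^ (s * (k * (k - 1) / 2)) * qsubPow q ξ y (n - s * k) * qsubPow q ζ z k /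
      ((qfact q (n - s * k) : ℂ) * (qfact (q ^ s) k : ℂ))

/-- The q-deformed Hermite polynomial
H_n(y,z|q) = [n]_q! Σ_{k=0}^{⌊n/2⌋} q^{k(k-1)} z^k y^{n-2k}/([k]_{q²}! [n-2k]_q!). -/
noncomputable def qHermite (q : ℝ) (y z : ℂ) (n : ℕ) : ℂ :=
  (qfact q n : ℂ) * ∑ k ∈ Finset.range (n / 2 + 1),
    (q : ℂ) ^ (k * (k - 1)) * z ^ k * y ^ (n - 2 * k) /
      ((qfact (q ^ 2) k : ℂ) * (qfact q (n - 2 * k) : ℂ))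

section ProofAux
variable {q : ℝ}

lemma qnat_pos (hq0 : 0 < q) (n : ℕ) : 0 < qnat q (n + 1) := by
  unfold qnat
  apply Finset.sum_pos (fun k _ => by positivity) Finset.nonempty_range_add_one

lemma qfact_pos (hq0 : 0 < q) (n : ℕ) : 0 < qfact q n :=
  Finset.prod_pos (fun k _ => qnat_pos hq0 k)

lemma qfact_ne (hq0 : 0 < q) (n : ℕ) : qfact q n ≠ 0 := (qfact_pos hq0 n).ne'

lemma qfact_zero : qfact q 0 = 1 := by simp [qfact]

lemma qfact_succ (n : ℕ) : qfact q (n + 1) = qfact q n * qnat q (n + 1) :=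
  Finset.prod_range_succ _ _

lemma qnat_add (a b : ℕ) : qnat q (a + b) = qnat q a + q ^ a * qnat q b := by
  unfold qnat
  rw [Finset.sum_range_add, Finset.mul_sum]
  simp [pow_add]

lemma qbinom_self (hq0 : 0 < q) (n : ℕ) : qbinom q n n = 1 := by
  unfold qbinom
  simp [qfact_zero, div_self (qfact_ne hq0 n)]

lemma qbinom_zero (hq0 : 0 < q) (n : ℕ) : qbinom q n 0 = 1 := by
  unfold qbinom
  simp [qfact_zero, div_self (qfact_ne hq0 n)]

lemma pascal (hq0 : 0 < q) {M i : ℕ} (h : i < M) :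
    qbinom q (M + 1) (i + 1) = q ^ (i + 1) * qbinom q M (i + 1) + qbinom q M i := by
  obtain ⟨d, rfl⟩ : ∃ d, M = i + 1 + d := ⟨M - (i + 1), by omega⟩
  unfold qbinom
  rw [show i + 1 + d + 1 - (i + 1) = d + 1 by omega, show i + 1 + d - (i + 1) = d by omega,
    show i + 1 + d - i = d + 1 by omega]
  have key : qnat q (i + 1 + d + 1) = qnat q (i + 1) + q ^ (i + 1) * qnat q (d + 1) := by
    rw [show i + 1 + d + 1 = (i + 1) + (d + 1) by ring, qnat_add]
  simp only [qfact_succ]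
  rw [key]
  have h1 := (qfact_ne hq0 (i + 1 + d))
  have h2 := (qfact_ne hq0 i)
  have h3 := (qfact_ne hq0 d)
  have h4 := (qnat_pos hq0 i).ne'
  have h5 := (qnat_pos hq0 d).ne'
  field_simp
  ring

lemma altsum (hq0 : 0 < q) {N : ℕ} (hN : 1 ≤ N) :
    ∑ i ∈ Finset.range (N + 1), qbinom q N i * (-1 : ℝ) ^ i * q ^ (i * (i - 1) / 2) = 0 := by
  obtain ⟨M, rfl⟩ : ∃ M, N = M + 1 := ⟨N - 1, by omega⟩
  set g : ℕ → ℝ := fun j => qbinom q M j * (-1) ^ j * q ^ (j * (j + 1) / 2) with hg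
  rw [Finset.sum_range_succ, Finset.sum_range_succ']
  have hstep : ∀ i ∈ Finset.range M,
      qbinom q (M + 1) (i + 1) * (-1 : ℝ) ^ (i + 1) * q ^ ((i + 1) * ((i + 1) - 1) / 2)
        = g (i + 1) - g i := by
    intro i hi
    rw [pascal hq0 (Finset.mem_range.mp hi)]
    have e : (i + 1) * ((i + 1) + 1) / 2 = i * (i + 1) / 2 + (i + 1) := by
      rw [show (i + 1) * ((i + 1) + 1) = i * (i + 1) + (i + 1) * 2 by ring,
        Nat.add_mul_div_right _ _ (by norm_num : (0:ℕ) < 2)]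
    simp only [hg, Nat.add_sub_cancel, e]
    rw [show (i + 1) * i = i * (i + 1) by ring, pow_add]
    ring
  rw [Finset.sum_congr rfl hstep, Finset.sum_range_sub g]
  simp only [hg, Nat.add_sub_cancel, qbinom_self hq0, qbinom_zero hq0]
  rw [show (M + 1) * M = M * (M + 1) by ring]
  ring


lemma trinom (hq0 : 0 < q) {a i m : ℕ} (h : a + i ≤ m) :
    qbinom q m (a + i) * qbinom q (a + i) i = qbinom q m a * qbinom q (m - a) i := by
  obtain ⟨d, rfl⟩ : ∃ d, m = a + i + d := ⟨m - (a + i), by omega⟩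
  unfold qbinom
  rw [show a + i + d - (a + i) = d by omega, show a + i - i = a by omega,
    show a + i + d - a = i + d by omega, show i + d - i = d by omega]
  have h1 := qfact_ne hq0 a
  have h2 := qfact_ne hq0 i
  have h3 := qfact_ne hq0 d
  have h4 := qfact_ne hq0 (a + i)
  have h5 := qfact_ne hq0 (i + d)
  field_simp

lemma mono (hq0 : 0 < q) (m : ℕ) (ξ y : ℂ) :
    ∑ k ∈ Finset.range (m + 1), (qbinom q m k : ℂ) * qsubPow q ξ y k * y ^ (m - k) = ξ ^ m := by
  have expand : ∀ k ∈ Finset.range (m + 1), (qbinom q m k : ℂ) * qsubPow q ξ y k * y ^ (m - k)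
      = ∑ i ∈ Finset.range (k + 1),
          (qbinom q m k : ℂ) * ((qbinom q k i : ℂ) * (q : ℂ) ^ (i * (i - 1) / 2)
            * ξ ^ (k - i) * (-y) ^ i) * y ^ (m - k) := by
    intro k _
    rw [qsubPow, Finset.mul_sum, Finset.sum_mul]
  rw [Finset.sum_congr rfl expand, Finset.sum_sigma']
  have step : (∑ x ∈ (Finset.range (m + 1)).sigma (fun k => Finset.range (k + 1)),
        (qbinom q m x.1 : ℂ) * ((qbinom q x.1 x.2 : ℂ) * (q : ℂ) ^ (x.2 * (x.2 - 1) / 2)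
          * ξ ^ (x.1 - x.2) * (-y) ^ x.2) * y ^ (m - x.1))
      = ∑ x ∈ (Finset.range (m + 1)).sigma (fun a => Finset.range (m - a + 1)),
        (qbinom q m (x.1 + x.2) : ℂ) * ((qbinom q (x.1 + x.2) x.2 : ℂ)
          * (q : ℂ) ^ (x.2 * (x.2 - 1) / 2) * ξ ^ x.1 * (-y) ^ x.2) * y ^ (m - x.1 - x.2) := by
    refine Finset.sum_nbij' (fun x => ⟨x.1 - x.2, x.2⟩) (fun x => ⟨x.1 + x.2, x.2⟩) ?_ ?_ ?_ ?_ ?_ <;>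
      simp only [Finset.mem_sigma, Finset.mem_range, Sigma.forall, Sigma.mk.inj_iff] <;>
      intro a b hab
    · omega
    · omega
    · exact ⟨by omega, HEq.rfl⟩
    · exact ⟨by omega, HEq.rfl⟩
    · obtain ⟨h1, h2⟩ := hab
      rw [show a - b + b = a by omega, show m - (a - b) - b = m - a by omega]
  rw [step, Finset.sum_sigma]
  rw [Finset.sum_eq_single_of_mem m (Finset.self_mem_range_succ m)]
  · simp [qbinom_self hq0, qbinom_zero hq0]
  · intro a ha hne
    have ham : a < m := by
      have := Finset.mem_range.mp ha; omega
    have inner : ∀ i ∈ Finset.range (m - a + 1),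
        (qbinom q m (a + i) : ℂ) * ((qbinom q (a + i) i : ℂ) * (q : ℂ) ^ (i * (i - 1) / 2)
          * ξ ^ a * (-y) ^ i) * y ^ (m - a - i)
        = ((qbinom q m a : ℂ) * ξ ^ a * y ^ (m - a)) *
            ((qbinom q (m - a) i : ℂ) * (-1 : ℂ) ^ i * (q : ℂ) ^ (i * (i - 1) / 2)) := by
      intro i hi
      have hi' : i ≤ m - a := by have := Finset.mem_range.mp hi; omega
      have htri := trinom hq0 (show a + i ≤ m by omega)
      have hy : (-y) ^ i * y ^ (m - a - i) = (-1 : ℂ) ^ i * y ^ (m - a) := by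
        rw [neg_pow, mul_assoc, ← pow_add, show i + (m - a - i) = m - a by omega]
      have hcast : (qbinom q m (a + i) : ℂ) * (qbinom q (a + i) i : ℂ)
          = (qbinom q m a : ℂ) * (qbinom q (m - a) i : ℂ) := by exact_mod_cast congrArg Complex.ofReal htri
      calc (qbinom q m (a + i) : ℂ) * ((qbinom q (a + i) i : ℂ) * (q : ℂ) ^ (i * (i - 1) / 2)
            * ξ ^ a * (-y) ^ i) * y ^ (m - a - i)
          = ((qbinom q m (a + i) : ℝ) * (qbinom q (a + i) i : ℝ) : ℂ)
            * (q : ℂ) ^ (i * (i - 1) / 2) * ξ ^ a * ((-y) ^ i * y ^ (m - a - i)) := by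
            push_cast; ring
        _ = (qbinom q m a : ℂ) * (qbinom q (m - a) i : ℂ)
            * (q : ℂ) ^ (i * (i - 1) / 2) * ξ ^ a * ((-1 : ℂ) ^ i * y ^ (m - a)) := by
            rw [hy]
            push_cast
            rw [hcast]
        _ = _ := by push_cast; ring
    rw [Finset.sum_congr rfl inner, ← Finset.mul_sum]
    have h0 : (∑ i ∈ Finset.range (m - a + 1),
        (qbinom q (m - a) i : ℂ) * (-1 : ℂ) ^ i * (q : ℂ) ^ (i * (i - 1) / 2)) = 0 := by
      have hr := altsum hq0 (show 1 ≤ m - a by omega)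
      calc (∑ i ∈ Finset.range (m - a + 1),
            (qbinom q (m - a) i : ℂ) * (-1 : ℂ) ^ i * (q : ℂ) ^ (i * (i - 1) / 2))
          = ((∑ i ∈ Finset.range (m - a + 1),
              qbinom q (m - a) i * (-1 : ℝ) ^ i * q ^ (i * (i - 1) / 2) : ℝ) : ℂ) := by
            push_cast; rfl
        _ = 0 := by rw [hr]; norm_num
    rw [h0, mul_zero]


lemma termEq (hq0 : 0 < q) {n j k : ℕ} (h : 2 * j + k ≤ n) (P zc yc : ℂ) :
    (qfact q n : ℂ) * ((q : ℂ) ^ (j * (j - 1)) * zc ^ j *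
        ((qbinom q (n - 2 * j) k : ℂ) * P * yc ^ (n - 2 * j - k)) /
        ((qfact (q ^ 2) j : ℂ) * (qfact q (n - 2 * j) : ℂ)))
    = (qbinom q n k : ℂ) * P * ((qfact q (n - k) : ℂ) *
        ((q : ℂ) ^ (j * (j - 1)) * zc ^ j * yc ^ (n - k - 2 * j) /
          ((qfact (q ^ 2) j : ℂ) * (qfact q (n - k - 2 * j) : ℂ)))) := by
  obtain ⟨d, rfl⟩ : ∃ d, n = 2 * j + k + d := ⟨n - (2 * j + k), by omega⟩
  rw [show 2 * j + k + d - 2 * j = k + d by omega, show k + d - k = d by omega,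
    show 2 * j + k + d - k = 2 * j + d by omega, show 2 * j + d - 2 * j = d by omega]
  unfold qbinom
  rw [show k + d - k = d by omega, show 2 * j + k + d - k = 2 * j + d by omega]
  have hq2 : (0 : ℝ) < q ^ 2 := by positivity
  have h1 : ((qfact q k : ℝ) : ℂ) ≠ 0 := by exact_mod_cast qfact_ne hq0 k
  have h2 : ((qfact q d : ℝ) : ℂ) ≠ 0 := by exact_mod_cast qfact_ne hq0 d
  have h3 : ((qfact q (k + d) : ℝ) : ℂ) ≠ 0 := by exact_mod_cast qfact_ne hq0 (k + d)
  have h4 : ((qfact q (2 * j + d) : ℝ) : ℂ) ≠ 0 := by exact_mod_cast qfact_ne hq0 (2 * j + d)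
  have h5 : ((qfact (q ^ 2) j : ℝ) : ℂ) ≠ 0 := by exact_mod_cast qfact_ne hq2 j
  push_cast
  field_simp

lemma hermadd (hq0 : 0 < q) (n : ℕ) (ξ y z : ℂ) :
    qHermite q ξ z n = ∑ k ∈ Finset.range (n + 1),
      (qbinom q n k : ℂ) * qsubPow q ξ y k * qHermite q y z (n - k) := by
  unfold qHermite
  rw [Finset.mul_sum]
  have lhs_expand : ∀ j ∈ Finset.range (n / 2 + 1),
      (qfact q n : ℂ) * ((q : ℂ) ^ (j * (j - 1)) * z ^ j * ξ ^ (n - 2 * j) /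
        ((qfact (q ^ 2) j : ℂ) * (qfact q (n - 2 * j) : ℂ)))
      = ∑ k ∈ Finset.range (n - 2 * j + 1),
          (qfact q n : ℂ) * ((q : ℂ) ^ (j * (j - 1)) * z ^ j *
            ((qbinom q (n - 2 * j) k : ℂ) * qsubPow q ξ y k * y ^ (n - 2 * j - k)) /
            ((qfact (q ^ 2) j : ℂ) * (qfact q (n - 2 * j) : ℂ))) := by
    intro j _
    rw [← mono hq0 (n - 2 * j) ξ y, Finset.mul_sum, Finset.sum_div, Finset.mul_sum]
  rw [Finset.sum_congr rfl lhs_expand]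
  have rhs_expand : ∀ k ∈ Finset.range (n + 1),
      (qbinom q n k : ℂ) * qsubPow q ξ y k * ((qfact q (n - k) : ℂ) *
        ∑ j ∈ Finset.range ((n - k) / 2 + 1),
          (q : ℂ) ^ (j * (j - 1)) * z ^ j * y ^ (n - k - 2 * j) /
            ((qfact (q ^ 2) j : ℂ) * (qfact q (n - k - 2 * j) : ℂ)))
      = ∑ j ∈ Finset.range ((n - k) / 2 + 1),
          (qbinom q n k : ℂ) * qsubPow q ξ y k * ((qfact q (n - k) : ℂ) *
            ((q : ℂ) ^ (j * (j - 1)) * z ^ j * y ^ (n - k - 2 * j) /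
              ((qfact (q ^ 2) j : ℂ) * (qfact q (n - k - 2 * j) : ℂ)))) := by
    intro k _
    rw [Finset.mul_sum, Finset.mul_sum]
  rw [Finset.sum_congr rfl rhs_expand, Finset.sum_sigma', Finset.sum_sigma']
  refine Finset.sum_nbij' (fun x => ⟨x.2, x.1⟩) (fun x => ⟨x.2, x.1⟩) ?_ ?_ ?_ ?_ ?_ <;>
    simp only [Finset.mem_sigma, Finset.mem_range, Sigma.forall, Sigma.mk.inj_iff] <;>
    intro a b hab
  · omega
  · omega
  · trivial
  · trivial
  · exact termEq hq0 (by omega) _ _ _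

end ProofAux

theorem qHermite_product_formula (q : ℝ) (hq0 : 0 < q) (hq1 : q < 1)
    (n r : ℕ) (ξ Ω y z Y Z : ℂ) :
    qHermite q ξ z n * qHermite q Ω Z r =
      ∑ k ∈ Finset.range (n + 1), ∑ p ∈ Finset.range (r + 1),
        (qbinom q n k : ℂ) * (qbinom q r p : ℂ) *
          qsubPow q ξ y k * qsubPow q Ω Y p *
          qHermite q y z (n - k) * qHermite q Y Z (r - p) := by
  rw [hermadd hq0 n ξ y z, hermadd hq0 r Ω Y Z, Finset.sum_mul_sum]
  exact Finset.sum_congr rfl fun k _ => Finset.sum_congr rfl fun p _ => by ring
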